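/- Let a, b, c, d be integers with a² + b² + c² = 3d², d odd, gcd(a,b,c) = 1, and set q := a² + b², A := ac, B := bd. Then there exist integers r, s, u, v such that 2q = s² + 3r², As − 3Br = 2qu, and Ar + Bs = −2qv. -/

import Mathlib

/-!
In `ℤ[√-3]` put `z = a c + b d √-3`, so that `N z = q (b² + c²)`; the claim says that `z` has a
divisor `α` of norm `2 q` (then `s + r √-3 = star α` and `u + v √-3 = star (z / α)`).
With `g = gcd (a, b)` and `h = gcd (c, d)`, which are coprime and odd, `g h ∣ z` and
`q = 2 g² h² n` with `n` odd. Every prime `p ∣ n` divides a sum of two coprime squares and a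
value `3 y² - x²` with `x, y` coprime, so `-1`, `3` and hence `-3` are squares mod `p`. By Thue's
lemma such a prime is a norm `N π`, and `π` or `star π` divides every element whose norm `p`
divides; by induction, every element whose norm `n` divides has a divisor of norm `n`. Finally
`4 n ∣ N (z / g h)`, and a divisor of norm `4` (`2` or `1 ± √-3`) times one of norm `n` times
`g h` has norm `2 q`.
-/

open Zsqrtd

theorem Int.sq_emod_four (x : ℤ) : x ^ 2 % 4 = x % 2 := by
  rcases Int.even_or_odd' x with ⟨k, rfl | rfl⟩ <;> ring_nf <;> omega

theorem Zsqrtd.norm_eq_sq_add_three_mul_sq (z : ℤ√(-3)) :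
    z.norm = z.re ^ 2 + 3 * z.im ^ 2 := by
  rw [norm_def]
  ring

instance : IsDomain (ℤ√(-3)) :=
  have : NoZeroDivisors (ℤ√(-3)) := ⟨fun {x y} h => by
    simpa [norm_mul, norm_eq_zero_iff (by norm_num : (-3 : ℤ) < 0)] using congrArg norm h⟩
  NoZeroDivisors.to_isDomain _

theorem exists_sq_le_and_dvd_sub_mul (n : ℕ) [NeZero n] (x : ℤ) :
    ∃ s r : ℤ, (s ≠ 0 ∨ r ≠ 0) ∧ (n : ℤ) ∣ s - x * r ∧ s ^ 2 ≤ n ∧ r ^ 2 ≤ n := by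
  set k := Nat.sqrt n
  have hcard : Fintype.card (ZMod n) < Fintype.card (Fin (k + 1) × Fin (k + 1)) := by
    simpa [ZMod.card, ← sq] using Nat.lt_succ_sqrt' n
  obtain ⟨⟨i, j⟩, ⟨i', j'⟩, hne, heq⟩ := Fintype.exists_ne_map_eq_of_card_lt
    (fun ij : Fin (k + 1) × Fin (k + 1) => ((ij.1 : ℕ) : ZMod n) - x * ((ij.2 : ℕ) : ZMod n))
    hcard
  have hsmall (a b : Fin (k + 1)) : ((a : ℤ) - b) ^ 2 ≤ n :=
    calc ((a : ℤ) - b) ^ 2 ≤ (k : ℤ) ^ 2 := sq_le_sq' (by omega) (by omega)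
      _ ≤ n := by exact_mod_cast Nat.sqrt_le' n
  refine ⟨i - i', j - j', ?_, ?_, hsmall i i', hsmall j j'⟩
  · simp only [ne_eq, Prod.mk.injEq, Fin.ext_iff] at hne
    omega
  · rw [← ZMod.intCast_zmod_eq_zero_iff_dvd]
    push_cast
    linear_combination heq

theorem exists_norm_eq_prime {p : ℕ} (hp : p.Prime) (hp2 : p ≠ 2)
    (hsq : IsSquare (-3 : ZMod p)) : ∃ π : ℤ√(-3), π.norm = p := by
  have := Fact.mk hp
  obtain ⟨x, hx⟩ := hsq
  obtain ⟨x, rfl⟩ := ZMod.intCast_surjective x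
  obtain ⟨s, r, hsr, hdvd, hs, hr⟩ := exists_sq_le_and_dvd_sub_mul p x
  have hs' : s ^ 2 < p := hs.lt_of_ne fun h =>
    (Nat.prime_iff_prime_int.mp hp).not_isSquare ⟨s, by rw [← h, sq]⟩
  obtain ⟨c, hc⟩ : (p : ℤ) ∣ s ^ 2 + 3 * r ^ 2 := by
    rw [← ZMod.intCast_zmod_eq_zero_iff_dvd] at hdvd ⊢
    push_cast at hdvd ⊢
    linear_combination (s + x * r) * hdvd - r ^ 2 * hx
  have hp0 : (0 : ℤ) < p := by exact_mod_cast hp.pos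
  have hc0 : 0 < c :=
    pos_of_mul_pos_right (hc ▸ by rcases hsr with h | h <;> positivity) hp0.le
  have hc4 : c < 4 := lt_of_mul_lt_mul_left (by linarith) hp0.le
  -- `s² + 3 r² = 2 p` is impossible mod 4, and `s² + 3 r² = 3 p` forces `3 ∣ s`.
  interval_cases c
  · exact ⟨⟨s, r⟩, by rw [norm_eq_sq_add_three_mul_sq]; linarith⟩
  · have := Int.sq_emod_four s
    have := Int.sq_emod_four r
    have : (p : ℤ) % 2 = 1 := by exact_mod_cast hp.eq_two_or_odd.resolve_left hp2
    rcases Int.emod_two_eq_zero_or_one r with h | h <;> omega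
  · obtain ⟨t, rfl⟩ : (3 : ℤ) ∣ s :=
      Int.prime_three.dvd_of_dvd_pow (n := 2) ⟨p - r ^ 2, by linarith⟩
    exact ⟨⟨r, t⟩, by rw [norm_eq_sq_add_three_mul_sq]; linarith⟩

theorem star_dvd_of_prime_dvd_re_mul {p : ℕ} (hp : p.Prime) (hp3 : p ≠ 3) {ρ z : ℤ√(-3)}
    (hρ : ρ.norm = p) (hre : (p : ℤ) ∣ (z * ρ).re) : star ρ ∣ z := by
  have hpZ := Nat.prime_iff_prime_int.mp hp
  have hρ0 : ρ ≠ 0 := by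
    rintro rfl
    exact hp.ne_zero (by exact_mod_cast (norm_zero ▸ hρ).symm)
  have him : (p : ℤ) ∣ (z * ρ).im := by
    obtain ⟨S, R⟩ := ρ
    obtain ⟨A, B⟩ := z
    simp only [norm_def, re_mul, im_mul] at hρ hre ⊢
    have hS : (p : ℤ) ∣ S * (A * R + B * S) := by
      rw [show S * (A * R + B * S) = R * (A * S + -3 * B * R) + B * p by
        linear_combination B * hρ]
      exact dvd_add (dvd_mul_of_dvd_right hre _) (dvd_mul_left _ _)
    have hR : (p : ℤ) ∣ 3 * R * (A * R + B * S) := by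
      rw [show 3 * R * (A * R + B * S) = A * p - S * (A * S + -3 * B * R) by
        linear_combination A * hρ]
      exact dvd_sub (dvd_mul_left _ _) (dvd_mul_of_dvd_right hre _)
    by_contra him
    have h3 : ¬ (p : ℤ) ∣ 3 := fun h =>
      hp3 ((Nat.prime_dvd_prime_iff_eq hp Nat.prime_three).mp (by exact_mod_cast h))
    obtain ⟨S', rfl⟩ := (hpZ.dvd_or_dvd hS).resolve_right him
    obtain ⟨R', rfl⟩ :=
      (hpZ.dvd_or_dvd ((hpZ.dvd_or_dvd hR).resolve_right him)).resolve_left h3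
    exact hpZ.not_dvd_one
      ⟨S' * S' + 3 * R' * R', mul_left_cancel₀ hpZ.ne_zero (by linear_combination -hρ)⟩
  rw [← mul_dvd_mul_iff_left hρ0, ← norm_eq_mul_conj, hρ, mul_comm, intCast_dvd]
  exact ⟨hre, him⟩

theorem exists_norm_eq_and_dvd_of_prime_dvd_norm {p : ℕ} (hp : p.Prime) (hp3 : p ≠ 3)
    {π z : ℤ√(-3)} (hπ : π.norm = p) (hz : (p : ℤ) ∣ z.norm) :
    ∃ ρ : ℤ√(-3), ρ.norm = p ∧ ρ ∣ z := by
  have hprod : (p : ℤ) ∣ (z * π).re * (z * star π).re := by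
    have : (z * π).re * (z * star π).re = π.re ^ 2 * z.norm - 3 * z.im ^ 2 * π.norm := by
      simp only [re_mul, re_star, im_star, norm_def]
      ring
    rw [this, hπ]
    exact dvd_sub (dvd_mul_of_dvd_right hz _) (dvd_mul_left _ _)
  rcases (Nat.prime_iff_prime_int.mp hp).dvd_or_dvd hprod with h | h
  · exact ⟨star π, by rw [norm_conj, hπ], star_dvd_of_prime_dvd_re_mul hp hp3 hπ h⟩
  · refine ⟨π, hπ, ?_⟩
    simpa using star_dvd_of_prime_dvd_re_mul hp hp3 (by rw [norm_conj, hπ]) h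

/-- Every prime factor of `n` splits in `ℚ(√-3)`. -/
def HasSplitPrimeFactors (n : ℕ) : Prop :=
  ∀ p : ℕ, p.Prime → p ∣ n → p ≠ 2 ∧ p ≠ 3 ∧ IsSquare (-3 : ZMod p)

theorem exists_norm_eq_and_dvd_of_dvd_norm (n : ℕ) (hn : HasSplitPrimeFactors n) {z : ℤ√(-3)}
    (hz : (n : ℤ) ∣ z.norm) : ∃ α : ℤ√(-3), α.norm = n ∧ α ∣ z := by
  induction n using induction_on_primes generalizing z with
  | zero => exact absurd rfl (hn 2 Nat.prime_two (dvd_zero 2)).1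
  | one => exact ⟨1, by simp, one_dvd z⟩
  | prime_mul p a hp ih =>
    obtain ⟨hp2, hp3, hsq⟩ := hn p hp (dvd_mul_right p a)
    obtain ⟨π, hπ⟩ := exists_norm_eq_prime hp hp2 hsq
    push_cast at hz
    obtain ⟨ρ, hρ, w, rfl⟩ :=
      exists_norm_eq_and_dvd_of_prime_dvd_norm hp hp3 hπ (dvd_of_mul_right_dvd hz)
    rw [norm_mul, hρ] at hz
    obtain ⟨α, hα, hαw⟩ := ih (fun q hq hqa => hn q hq (dvd_mul_of_dvd_right hqa p))
      ((mul_dvd_mul_iff_left (by exact_mod_cast hp.ne_zero)).mp hz)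
    exact ⟨ρ * α, by rw [norm_mul, hρ, hα]; push_cast; ring, mul_dvd_mul_left ρ hαw⟩

theorem exists_norm_eq_four_and_dvd {z : ℤ√(-3)} (hz : 4 ∣ z.norm) :
    ∃ β : ℤ√(-3), β.norm = 4 ∧ β ∣ z := by
  obtain ⟨A, B⟩ := z
  rw [norm_eq_sq_add_three_mul_sq] at hz
  dsimp only at hz
  have := Int.sq_emod_four A
  have := Int.sq_emod_four B
  rcases (by omega : (2 ∣ A ∧ 2 ∣ B) ∨ 4 ∣ A - B ∨ 4 ∣ A + B)
    with ⟨⟨A, rfl⟩, B, rfl⟩ | ⟨k, hk⟩ | ⟨k, hk⟩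
  · exact ⟨2, by simp [norm_def], ⟨A, B⟩, by ext <;> simp⟩
  · exact ⟨⟨1, 1⟩, by simp [norm_def], ⟨B + k, -k⟩, by ext <;> simp; linarith⟩
  · exact ⟨⟨1, -1⟩, by simp [norm_def], ⟨A - 3 * k, k⟩, by ext <;> simp; linarith⟩

theorem exists_norm_eq_four_mul_and_dvd (n : ℕ) (hn : HasSplitPrimeFactors n) {z : ℤ√(-3)}
    (hz : 4 * (n : ℤ) ∣ z.norm) : ∃ α : ℤ√(-3), α.norm = 4 * n ∧ α ∣ z := by
  obtain ⟨β, hβ, w, rfl⟩ := exists_norm_eq_four_and_dvd (dvd_of_mul_right_dvd hz)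
  rw [norm_mul, hβ] at hz
  obtain ⟨α, hα, hαw⟩ :=
    exists_norm_eq_and_dvd_of_dvd_norm n hn ((mul_dvd_mul_iff_left four_ne_zero).mp hz)
  exact ⟨β * α, by rw [norm_mul, hβ, hα], mul_dvd_mul_left β hαw⟩

theorem odd_of_sq_add_sq_add_sq_eq_three_mul_sq {a b c d : ℤ}
    (h : a ^ 2 + b ^ 2 + c ^ 2 = 3 * d ^ 2) (hd : Odd d) : Odd a ∧ Odd b ∧ Odd c := by
  have := Int.sq_emod_four a
  have := Int.sq_emod_four b
  have := Int.sq_emod_four c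
  have := Int.sq_emod_four d
  simp only [Int.odd_iff] at *
  omega

theorem isSquare_of_dvd_sq_sub_mul_sq {p : ℕ} [Fact p.Prime] {x y k : ℤ} (hxy : IsCoprime x y)
    (h : (p : ℤ) ∣ x ^ 2 - k * y ^ 2) : IsSquare (k : ZMod p) := by
  have hpZ := Nat.prime_iff_prime_int.mp (Fact.out : p.Prime)
  have hy : (y : ZMod p) ≠ 0 := by
    rw [Ne, ZMod.intCast_zmod_eq_zero_iff_dvd]
    intro hpy
    have hpx : (p : ℤ) ∣ x := hpZ.dvd_of_dvd_pow (n := 2)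
      (by simpa using dvd_add h (dvd_mul_of_dvd_right (dvd_pow hpy two_ne_zero) k))
    exact hpZ.not_isUnit (hxy.isUnit_of_dvd' hpx hpy)
  rw [← ZMod.intCast_zmod_eq_zero_iff_dvd] at h
  push_cast at h
  exact ⟨x / y, by field_simp; linear_combination -h⟩

theorem ne_three_and_isSquare_neg_three {p : ℕ} [Fact p.Prime] {a b c d : ℤ}
    (hab : IsCoprime a b) (hcd : IsCoprime c d) (h₁ : (p : ℤ) ∣ a ^ 2 + b ^ 2)
    (h₃ : (p : ℤ) ∣ 3 * d ^ 2 - c ^ 2) : p ≠ 3 ∧ IsSquare (-3 : ZMod p) := by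
  have hneg : IsSquare ((-1 : ℤ) : ZMod p) :=
    isSquare_of_dvd_sq_sub_mul_sq hab (by simpa using h₁)
  have hthree : IsSquare ((3 : ℤ) : ZMod p) :=
    isSquare_of_dvd_sq_sub_mul_sq hcd (by simpa [neg_sub] using h₃.neg_right)
  push_cast at hneg hthree
  refine ⟨fun h3 => ZMod.exists_sq_eq_neg_one_iff.mp hneg (by omega), ?_⟩
  simpa using hneg.mul hthree

theorem exists_sq_add_sq_eq_two_mul_sq_mul {a b c d g h : ℤ} (hab : IsCoprime a b)
    (hcd : IsCoprime c d) (hgh : IsCoprime g h)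
    (habcd : (a * g) ^ 2 + (b * g) ^ 2 + (c * h) ^ 2 = 3 * (d * h) ^ 2) (hd : Odd (d * h)) :
    ∃ n : ℕ, a ^ 2 + b ^ 2 = 2 * h ^ 2 * n ∧ 3 * d ^ 2 - c ^ 2 = 2 * g ^ 2 * n ∧
      HasSplitPrimeFactors n := by
  obtain ⟨hag, hbg, -⟩ := odd_of_sq_add_sq_add_sq_eq_three_mul_sq habcd hd
  have hg := (Int.odd_mul.mp hag).2
  have hh := (Int.odd_mul.mp hd).2
  have hg0 : g ≠ 0 := by rintro rfl; simp at hg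
  have hh0 : h ≠ 0 := by rintro rfl; simp at hh
  obtain ⟨t, ht⟩ : (g * h) ^ 2 ∣ (a * g) ^ 2 + (b * g) ^ 2 := by
    rw [mul_pow]
    exact hgh.pow.mul_dvd ⟨a ^ 2 + b ^ 2, by ring⟩
      ⟨3 * d ^ 2 - c ^ 2, by linear_combination habcd⟩
  have ht4 : t % 4 = 2 := by
    have := Int.sq_mod_four_eq_one_of_odd hag
    have := Int.sq_mod_four_eq_one_of_odd hbg
    have : (g * h) ^ 2 * t % 4 = t % 4 := by
      rw [Int.mul_emod, Int.sq_mod_four_eq_one_of_odd (hg.mul hh), one_mul, Int.emod_emod]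
    omega
  obtain ⟨n, rfl, hn⟩ : ∃ n, t = 2 * n ∧ n % 2 = 1 := ⟨t / 2, by omega, by omega⟩
  have hab' : a ^ 2 + b ^ 2 = 2 * h ^ 2 * n :=
    mul_left_cancel₀ (pow_ne_zero 2 hg0) (by linear_combination ht)
  have hcd' : 3 * d ^ 2 - c ^ 2 = 2 * g ^ 2 * n :=
    mul_left_cancel₀ (pow_ne_zero 2 hh0) (by linear_combination ht - habcd)
  lift n to ℕ using
    nonneg_of_mul_nonneg_right (hab' ▸ by positivity : 0 ≤ 2 * h ^ 2 * n) (by positivity)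
  refine ⟨n, hab', hcd', fun p hp hpn => ?_⟩
  have := Fact.mk hp
  have hpn' : (p : ℤ) ∣ n := Int.natCast_dvd_natCast.mpr hpn
  obtain ⟨hp3, hsq⟩ := ne_three_and_isSquare_neg_three hab hcd
    (hab' ▸ dvd_mul_of_dvd_right hpn' _) (hcd' ▸ dvd_mul_of_dvd_right hpn' _)
  refine ⟨?_, hp3, hsq⟩
  rintro rfl
  omega

theorem exists_norm_eq_two_mul_sq_add_sq_and_dvd {a b c d : ℤ}
    (habc : a ^ 2 + b ^ 2 + c ^ 2 = 3 * d ^ 2) (hd : Odd d)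
    (hgcd : Int.gcd (Int.gcd a b) c = 1) :
    ∃ α : ℤ√(-3), α.norm = 2 * (a ^ 2 + b ^ 2) ∧ α ∣ ⟨a * c, b * d⟩ := by
  obtain ⟨ha, hb, hc⟩ := odd_of_sq_add_sq_add_sq_eq_three_mul_sq habc hd
  have hgh : IsCoprime (Int.gcd a b : ℤ) (Int.gcd c d) :=
    (Int.isCoprime_iff_gcd_eq_one.mpr hgcd).of_isCoprime_of_dvd_right (Int.gcd_dvd_left c d)
  have ha0 : a ≠ 0 := by rintro rfl; simp at ha
  have hd0 : d ≠ 0 := by rintro rfl; simp at hd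
  obtain ⟨a', b', hab, ha', hb'⟩ := Int.exists_gcd_one (Int.gcd_pos_iff.mpr (.inl ha0))
  obtain ⟨c', d', hcd, hc', hd'⟩ :=
    Int.exists_gcd_one (Int.gcd_pos_iff.mpr (.inr hd0 : c ≠ 0 ∨ d ≠ 0))
  generalize (Int.gcd a b : ℤ) = g at hgh ha' hb'
  generalize (Int.gcd c d : ℤ) = h at hgh hc' hd'
  subst ha' hb' hc' hd'
  obtain ⟨n, hab', hcd', hn⟩ := exists_sq_add_sq_eq_two_mul_sq_mul
    (Int.isCoprime_iff_gcd_eq_one.mpr hab) (Int.isCoprime_iff_gcd_eq_one.mpr hcd) hgh habc hd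
  obtain ⟨k, hk⟩ := (hb.pow.add_odd hc.pow : Even ((b' * g) ^ 2 + (c' * h) ^ 2)).two_dvd
  obtain ⟨α, hα, hαz⟩ := exists_norm_eq_four_mul_and_dvd n hn (z := ⟨a' * c', b' * d'⟩)
    ⟨k, by
      rw [norm_eq_sq_add_three_mul_sq]
      linear_combination c' ^ 2 * hab' + b' ^ 2 * hcd' + 2 * n * hk⟩
  refine ⟨(g * h : ℤ) * α, ?_, ?_⟩
  · rw [norm_mul, norm_intCast, hα]
    linear_combination -2 * g ^ 2 * hab'
  · convert mul_dvd_mul_left ((g * h : ℤ) : ℤ√(-3)) hαz using 1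
    ext <;> simp <;> ring

/-- Existence of a suitable solution `(r, s)` of `2q = s² + 3r²` with
`As − 3Br = 2qu` and `Ar + Bs = −2qv`, where `q = a² + b²`, `A = ac`, `B = bd`. -/
theorem exists_r_s_u_v (a b c d : ℤ) (habc : a ^ 2 + b ^ 2 + c ^ 2 = 3 * d ^ 2)
    (hd : Odd d) (hgcd : Int.gcd (Int.gcd a b) c = 1) :
    ∃ r s u v : ℤ,
      2 * (a ^ 2 + b ^ 2) = s ^ 2 + 3 * r ^ 2 ∧
      (a * c) * s - 3 * (b * d) * r = 2 * (a ^ 2 + b ^ 2) * u ∧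
      (a * c) * r + (b * d) * s = -(2 * (a ^ 2 + b ^ 2) * v) := by
  obtain ⟨α, hα, w, hw⟩ := exists_norm_eq_two_mul_sq_add_sq_and_dvd habc hd hgcd
  rw [norm_eq_sq_add_three_mul_sq] at hα
  have hre := congrArg re hw
  have him := congrArg im hw
  simp only [re_mul, im_mul] at hre him
  refine ⟨-α.im, α.re, w.re, -w.im, by linear_combination -hα, ?_, ?_⟩
  · linear_combination α.re * hre + 3 * α.im * him + w.re * hα
  · linear_combination -α.im * hre + α.re * him + w.im * hα
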